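/- Let γ₁ : ℝⁿ → (0,∞] be the Gradient-Normalized Smoothness of a differentiable f with respect to a matrix field H₁, i.e., for each x, ‖∇f(x+h) − ∇f(x) − H₁(x)h‖_* ≤ ‖∇f(x)‖_*‖h‖/γ₁(x) for all h in B_{γ₁(x)} ∩ O_x. Suppose H₂ is another matrix field with ‖H₁(x) − H₂(x)‖ ≤ ‖∇f(x)‖_* / γ₁₂(x) for some function γ₁₂ > 0. Then for γ := (γ₁(x)^{-1} + γ₁₂(x)^{-1})^{-1} ≤ γ₁(x), one has ‖∇f(x+h) − ∇f(x) − H₂(x)h‖_* ≤ ‖∇f(x)‖_*‖h‖/γ for all h in B_γ ∩ O_x. -/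

import Mathlib

open Matrix
open scoped RealInnerProductSpace

/-!
The remainder of the model with `H₂` is the remainder of the model with `H₁` plus `(H₁ - H₂) h`.
The dual norm is the square root of the positive quadratic form of `B⁻¹`, hence subadditive by
Cauchy–Schwarz, so the remainder is at most `‖∇f(x)‖_* ‖h‖ (γ₁⁻¹ + γ₁₂⁻¹) = ‖∇f(x)‖_* ‖h‖ / γ`;
the `H₁`-bound is available on `B_γ ∩ O_x` because `γ ≤ γ₁`.
-/

noncomputable def normB {n : ℕ} (B : Matrix (Fin n) (Fin n) ℝ)
    (h : EuclideanSpace ℝ (Fin n)) : ℝ :=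
  Real.sqrt ⟪h, Matrix.toEuclideanLin B h⟫

noncomputable def dualNormB {n : ℕ} (B : Matrix (Fin n) (Fin n) ℝ)
    (s : EuclideanSpace ℝ (Fin n)) : ℝ :=
  Real.sqrt ⟪s, Matrix.toEuclideanLin B⁻¹ s⟫

theorem inv_add_inv_inv_le_left {K : Type*} [Field K] [LinearOrder K] [IsStrictOrderedRing K]
    {a b : K} (ha : 0 < a) (hb : 0 ≤ b) : (a⁻¹ + b⁻¹)⁻¹ ≤ a :=
  inv_le_of_inv_le₀ ha (le_add_of_nonneg_right (inv_nonneg.mpr hb))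

theorem LinearMap.BilinForm.sqrt_apply_add_le {M : Type*} [AddCommGroup M] [Module ℝ M]
    (B : LinearMap.BilinForm ℝ M) (hs : ∀ x, 0 ≤ B x x) (hB : LinearMap.IsSymm B) (x y : M) :
    √(B (x + y) (x + y)) ≤ √(B x x) + √(B y y) := by
  have hcross : B x y ≤ √(B x x) * √(B y y) := by
    rw [← Real.sqrt_mul (hs x)]
    exact (le_abs_self _).trans (Real.abs_le_sqrt (B.apply_sq_le_of_symm hs hB x y))
  have hexpand : B (x + y) (x + y) = B x x + 2 * B x y + B y y := by
    have hyx : B y x = B x y := (hB.eq x y).symm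
    simp only [map_add, LinearMap.add_apply, hyx]
    ring
  rw [Real.sqrt_le_left (by positivity), hexpand, add_sq, Real.sq_sqrt (hs x),
    Real.sq_sqrt (hs y)]
  linarith

theorem LinearMap.IsPositive.sqrt_inner_map_add_le {E : Type*} [NormedAddCommGroup E]
    [InnerProductSpace ℝ E] {T : E →ₗ[ℝ] E} (hT : T.IsPositive) (x y : E) :
    √⟪x + y, T (x + y)⟫ ≤ √⟪x, T x⟫ + √⟪y, T y⟫ :=
  LinearMap.BilinForm.sqrt_apply_add_le ((innerₗ E).compl₂ T) hT.inner_nonneg_right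
    ⟨fun x y => (hT.isSymmetric x y).symm.trans (real_inner_comm _ _)⟩ x y

theorem dualNormB_add_le {n : ℕ} {B : Matrix (Fin n) (Fin n) ℝ} (hB : B.PosDef)
    (s t : EuclideanSpace ℝ (Fin n)) :
    dualNormB B (s + t) ≤ dualNormB B s + dualNormB B t :=
  (Matrix.isPositive_toEuclideanLin_iff.mpr hB.inv.posSemidef).sqrt_inner_map_add_le s t

theorem gradient_normalized_smoothness_hessian_perturbation_general {n : ℕ}
    (f : EuclideanSpace ℝ (Fin n) → ℝ)
    (B : Matrix (Fin n) (Fin n) ℝ) (hB : B.PosDef)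
    (H₁ H₂ : Matrix (Fin n) (Fin n) ℝ)
    (x : EuclideanSpace ℝ (Fin n))
    (γ₁ γ₁₂ : ℝ) (hγ₁ : 0 < γ₁) (hγ₁₂ : 0 < γ₁₂)
    (hGNS : ∀ h : EuclideanSpace ℝ (Fin n),
      normB B h ≤ γ₁ →
      ⟪fderiv ℝ (gradient f) x h, h⟫ + ⟪gradient f x, h⟫ ≤ 0 →
      dualNormB B (gradient f (x + h) - gradient f x - Matrix.toEuclideanLin H₁ h)
        ≤ dualNormB B (gradient f x) * normB B h / γ₁)
    (hpert : ∀ h : EuclideanSpace ℝ (Fin n),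
      dualNormB B (Matrix.toEuclideanLin (H₁ - H₂) h)
        ≤ dualNormB B (gradient f x) / γ₁₂ * normB B h)
    (γ : ℝ) (hγ : γ = (γ₁⁻¹ + γ₁₂⁻¹)⁻¹) :
    γ ≤ γ₁ ∧
      ∀ h : EuclideanSpace ℝ (Fin n),
        normB B h ≤ γ →
        ⟪fderiv ℝ (gradient f) x h, h⟫ + ⟪gradient f x, h⟫ ≤ 0 →
        dualNormB B (gradient f (x + h) - gradient f x - Matrix.toEuclideanLin H₂ h)
          ≤ dualNormB B (gradient f x) * normB B h / γ := by
  have hγle : γ ≤ γ₁ := hγ ▸ inv_add_inv_inv_le_left hγ₁ hγ₁₂.le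
  refine ⟨hγle, fun h hr hO => ?_⟩
  set g := gradient f x
  calc dualNormB B (gradient f (x + h) - g - Matrix.toEuclideanLin H₂ h)
      = dualNormB B ((gradient f (x + h) - g - Matrix.toEuclideanLin H₁ h)
          + Matrix.toEuclideanLin (H₁ - H₂) h) := by
        rw [map_sub, LinearMap.sub_apply]; abel_nf
    _ ≤ dualNormB B (gradient f (x + h) - g - Matrix.toEuclideanLin H₁ h)
          + dualNormB B (Matrix.toEuclideanLin (H₁ - H₂) h) := dualNormB_add_le hB _ _
    _ ≤ dualNormB B g * normB B h / γ₁ + dualNormB B g / γ₁₂ * normB B h :=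
        add_le_add (hGNS h (hr.trans hγle) hO) (hpert h)
    _ = dualNormB B g * normB B h / γ := by rw [hγ, div_inv_eq_mul]; ring

theorem gradient_normalized_smoothness_hessian_perturbation {n : ℕ}
    (f : EuclideanSpace ℝ (Fin n) → ℝ) (hf : ContDiff ℝ 2 f)
    (B : Matrix (Fin n) (Fin n) ℝ) (hB : B.PosDef)
    (H₁ H₂ : Matrix (Fin n) (Fin n) ℝ)
    (x : EuclideanSpace ℝ (Fin n))
    (γ₁ γ₁₂ : ℝ) (hγ₁ : 0 < γ₁) (hγ₁₂ : 0 < γ₁₂)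
    (hGNS : ∀ h : EuclideanSpace ℝ (Fin n),
      normB B h ≤ γ₁ →
      ⟪fderiv ℝ (gradient f) x h, h⟫ + ⟪gradient f x, h⟫ ≤ 0 →
      dualNormB B (gradient f (x + h) - gradient f x - Matrix.toEuclideanLin H₁ h)
        ≤ dualNormB B (gradient f x) * normB B h / γ₁)
    (hpert : ∀ h : EuclideanSpace ℝ (Fin n),
      dualNormB B (Matrix.toEuclideanLin (H₁ - H₂) h)
        ≤ dualNormB B (gradient f x) / γ₁₂ * normB B h)
    (γ : ℝ) (hγ : γ = (γ₁⁻¹ + γ₁₂⁻¹)⁻¹) :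
    γ ≤ γ₁ ∧
      ∀ h : EuclideanSpace ℝ (Fin n),
        normB B h ≤ γ →
        ⟪fderiv ℝ (gradient f) x h, h⟫ + ⟪gradient f x, h⟫ ≤ 0 →
        dualNormB B (gradient f (x + h) - gradient f x - Matrix.toEuclideanLin H₂ h)
          ≤ dualNormB B (gradient f x) * normB B h / γ :=
  gradient_normalized_smoothness_hessian_perturbation_general f B hB H₁ H₂ x γ₁ γ₁₂ hγ₁ hγ₁₂ hGNS
    hpert γ hγ
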